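/- Let φ_n ∈ 𝓒 w-converge to φ ∈ 𝓒 and let ψ_n ∈ 𝓒 w-converge to ψ ∈ 𝓒, and suppose ⟨φ_n − φ, ψ_n − ψ⟩_n ≥ 0 for all n ∈ ℕ. Then liminf_{n→∞} ⟨φ_n, ψ_n⟩_n ≥ ⟨φ, ψ⟩. -/

import Mathlib

open MeasureTheory Filter Topology

noncomputable section

namespace Mosco

variable {E : Type*} [MeasurableSpace E]

/-- The inner product of two real-valued functions with respect to a measure,
`⟨φ, ψ⟩ = ∫ φ ψ dμ`. -/
def ip (μ : Measure E) (φ ψ : E → ℝ) : ℝ := ∫ x, φ x * ψ x ∂μ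

/-- The framework of Section 2.1: mutually singular probability measures `ν n`, `n : ℕ`
(`ν 0` playing the role of the limit measure `ν`), such that `L²(E, ν 0)` is separable,
together with disjoint sets `En n` carrying `ν n`, and a linear subset `F = 𝓕 ⊆ 𝓓`
which is dense in `L²(E, ν 0)`. -/
structure Frame (E : Type*) [MeasurableSpace E] where
  ν : ℕ → Measure E
  prob : ∀ n, IsProbabilityMeasure (ν n)
  singular : ∀ m n, m ≠ n → (ν m).MutuallySingular (ν n)
  separableL2 : TopologicalSpace.SeparableSpace (Lp ℝ 2 (ν 0))
  En : ℕ → Set E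
  measEn : ∀ n, MeasurableSet (En n)
  disjEn : ∀ m n, m ≠ n → Disjoint (En m) (En n)
  nullEn : ∀ n, ν n (En n)ᶜ = 0
  F : Set (E → ℝ)
  F_measurable : ∀ φ ∈ F, Measurable φ
  F_memL2 : ∀ φ ∈ F, ∀ n, MemLp φ 2 (ν n)
  F_tendsto : ∀ φ ∈ F, Tendsto (fun n => ip (ν n) φ φ) atTop (𝓝 (ip (ν 0) φ φ))
  F_linear : ∀ φ ∈ F, ∀ ψ ∈ F, ∀ a b : ℝ, (fun x => a * φ x + b * ψ x) ∈ F
  F_dense : ∀ f : E → ℝ, Measurable f → MemLp f 2 (ν 0) → ∀ ε : ℝ, 0 < ε →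
    ∃ φ ∈ F, ip (ν 0) (fun x => f x - φ x) (fun x => f x - φ x) < ε

/-- The set `𝓓`: everywhere defined measurable functions lying in every `L²(E, ν n)`
whose `ν n`-norms converge to the `ν 0`-norm. -/
def Frame.D (fr : Frame E) : Set (E → ℝ) :=
  {φ | Measurable φ ∧ (∀ n, MemLp φ 2 (fr.ν n)) ∧
    Tendsto (fun n => ip (fr.ν n) φ φ) atTop (𝓝 (ip (fr.ν 0) φ φ))}

/-- The set `𝓒`: elements of `𝓓` satisfying conditions (c1) and (c2). -/
def Frame.C (fr : Frame E) : Set (E → ℝ) :=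
  {φ | φ ∈ fr.D ∧ (∀ n, 1 ≤ n → ∃ g ∈ fr.F, φ =ᵐ[fr.ν n] g) ∧
    ∀ ψ ∈ fr.F, Tendsto (fun n => ip (fr.ν n) φ ψ) atTop (𝓝 (ip (fr.ν 0) φ ψ))}

/-- The set `𝓥` of multipliers mapping `𝓓` into `𝓓` and `𝓕` into `𝓕`. -/
def Frame.V (fr : Frame E) : Set (E → ℝ) :=
  {ψ | Measurable ψ ∧ (∀ n, MemLp ψ 2 (fr.ν n)) ∧
    (∀ σ ∈ fr.D, (fun x => σ x * ψ x) ∈ fr.D) ∧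
    (∀ τ ∈ fr.F, (fun x => τ x * ψ x) ∈ fr.F)}

/-- `w`-convergence of a sequence `φs` (with `φs n` regarded as an element of
`L²(E, ν n)`) to `φ ∈ L²(E, ν 0)`. -/
def Frame.WConv (fr : Frame E) (φs : ℕ → E → ℝ) (φ : E → ℝ) : Prop :=
  ∀ ψ ∈ fr.C, Tendsto (fun n => ip (fr.ν n) (φs n) ψ) atTop (𝓝 (ip (fr.ν 0) φ ψ))

/-- `s`-convergence: `w`-convergence together with convergence of the norms. -/
def Frame.SConv (fr : Frame E) (φs : ℕ → E → ℝ) (φ : E → ℝ) : Prop :=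
  fr.WConv φs φ ∧
  Tendsto (fun n => ip (fr.ν n) (φs n) (φs n)) atTop (𝓝 (ip (fr.ν 0) φ φ))

/-! The hypothesis expands to `⟨φₙ, ψ⟩ₙ + ⟨φ, ψₙ⟩ₙ - ⟨φ, ψ⟩ₙ ≤ ⟨φₙ, ψₙ⟩ₙ`, and the left side tends
to `⟨φ, ψ⟩` by w-convergence and because `⟨φ, ψ⟩ₙ → ⟨φ, ψ⟩` for `φ, ψ ∈ 𝓒` (approximate `ψ` in
`L²(ν)` by elements of `𝓕`).

Mathlib's `liminf` of a real sequence is a junk value unless the sequence is bounded above, so we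
also need that w-convergent sequences are bounded. This is a sliding hump argument: if `‖φₙ‖ₙ`
were unbounded, gluing rescaled `𝓕`-representatives of the `φₙ` along the disjoint sets `Eₙ`
would produce a test function in `𝓒` against which `φₙ` does not converge. -/

section InnerProduct

variable {μ : Measure E} {f f' g g' : E → ℝ}

lemma ip_comm (μ : Measure E) (f g : E → ℝ) : ip μ f g = ip μ g f := by
  simp only [ip, mul_comm]

lemma ip_const_mul_left (a : ℝ) (f g : E → ℝ) :
    ip μ (fun x => a * f x) g = a * ip μ f g := by
  simp only [ip, mul_assoc, integral_const_mul]

lemma ip_congr_ae (hf : f =ᵐ[μ] f') (hg : g =ᵐ[μ] g') : ip μ f g = ip μ f' g' :=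
  integral_congr_ae (hf.mul hg)

lemma ip_eq_inner (hf : MemLp f 2 μ) (hg : MemLp g 2 μ) :
    ip μ f g = inner ℝ (hf.toLp f) (hg.toLp g) := by
  rw [L2.inner_def]
  refine integral_congr_ae ?_
  filter_upwards [hf.coeFn_toLp, hg.coeFn_toLp] with x hfx hgx
  simp [hfx, hgx, mul_comm]

lemma abs_ip_le (hf : MemLp f 2 μ) (hg : MemLp g 2 μ) :
    |ip μ f g| ≤ √(ip μ f f) * √(ip μ g g) := by
  rw [ip_eq_inner hf hg, ip_eq_inner hf hf, ip_eq_inner hg hg,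
    real_inner_self_eq_norm_mul_norm, real_inner_self_eq_norm_mul_norm,
    Real.sqrt_mul_self (norm_nonneg _), Real.sqrt_mul_self (norm_nonneg _)]
  exact abs_real_inner_le_norm _ _

lemma ip_sub_left (hf : MemLp f 2 μ) (hf' : MemLp f' 2 μ) (hg : MemLp g 2 μ) :
    ip μ (fun x => f x - f' x) g = ip μ f g - ip μ f' g := by
  simp only [ip, sub_mul]
  exact integral_sub (hf.integrable_mul hg) (hf'.integrable_mul hg)

lemma ip_sub_right (hf : MemLp f 2 μ) (hg : MemLp g 2 μ) (hg' : MemLp g' 2 μ) :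
    ip μ f (fun x => g x - g' x) = ip μ f g - ip μ f g' := by
  rw [ip_comm, ip_sub_left hg hg' hf, ip_comm μ g, ip_comm μ g']

lemma ip_sub_sub (hf : MemLp f 2 μ) (hf' : MemLp f' 2 μ) (hg : MemLp g 2 μ)
    (hg' : MemLp g' 2 μ) :
    ip μ (fun x => f x - f' x) (fun x => g x - g' x)
      = ip μ f g - ip μ f g' - ip μ f' g + ip μ f' g' := by
  rw [ip_sub_left (g := fun x => g x - g' x) hf hf' (hg.sub hg'), ip_sub_right hf hg hg',
    ip_sub_right hf' hg hg']
  ring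

end InnerProduct

section Sequences

variable {μ : ℕ → Measure E} {f g : ℕ → E → ℝ}

lemma isBoundedUnder_ip (hf : ∀ n, MemLp (f n) 2 (μ n)) (hg : ∀ n, MemLp (g n) 2 (μ n))
    (hfb : IsBoundedUnder (· ≤ ·) atTop fun n => ip (μ n) (f n) (f n))
    (hgb : IsBoundedUnder (· ≤ ·) atTop fun n => ip (μ n) (g n) (g n)) :
    IsBoundedUnder (· ≤ ·) atTop fun n => ip (μ n) (f n) (g n) := by
  obtain ⟨a, ha⟩ := hfb
  obtain ⟨b, hb⟩ := hgb
  refine ⟨√a * √b, eventually_map.2 ?_⟩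
  filter_upwards [eventually_map.1 ha, eventually_map.1 hb] with n han hbn
  exact (le_abs_self _).trans <| (abs_ip_le (hf n) (hg n)).trans <| by gcongr

lemma tendsto_ip_zero (hf : ∀ n, MemLp (f n) 2 (μ n)) (hg : ∀ n, MemLp (g n) 2 (μ n))
    (hf0 : Tendsto (fun n => ip (μ n) (f n) (f n)) atTop (𝓝 0))
    (hgb : IsBoundedUnder (· ≤ ·) atTop fun n => ip (μ n) (g n) (g n)) :
    Tendsto (fun n => ip (μ n) (f n) (g n)) atTop (𝓝 0) := by
  obtain ⟨b, hb⟩ := hgb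
  have hsqrt : IsBoundedUnder (· ≤ ·) atTop fun n => ‖√(ip (μ n) (g n) (g n))‖ := by
    refine ⟨√b, eventually_map.2 ?_⟩
    filter_upwards [eventually_map.1 hb] with n hbn
    rw [Real.norm_of_nonneg (Real.sqrt_nonneg _)]
    exact Real.sqrt_le_sqrt hbn
  refine squeeze_zero_norm (fun n => abs_ip_le (hf n) (hg n)) ?_
  exact .zero_mul_isBoundedUnder_le (by simpa using hf0.sqrt) hsqrt

lemma tendsto_of_forall_approx {u : ℕ → ℝ} {a : ℝ}
    (h : ∀ ε > 0, ∃ v : ℕ → ℝ, ∃ b, Tendsto v atTop (𝓝 b) ∧ |a - b| ≤ ε ∧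
      ∀ᶠ n in atTop, |u n - v n| ≤ ε) :
    Tendsto u atTop (𝓝 a) := by
  refine Metric.tendsto_nhds.2 fun ε hε => ?_
  obtain ⟨v, b, hv, hab, huv⟩ := h (ε / 4) (by positivity)
  filter_upwards [huv, Metric.tendsto_nhds.1 hv (ε / 4) (by positivity)] with n hun hvn
  rw [Real.dist_eq] at hvn ⊢
  calc |u n - a| = |(u n - v n) + (v n - b) + (b - a)| := by ring_nf
    _ ≤ |u n - v n| + |v n - b| + |b - a| := abs_add_three _ _ _
    _ < ε := by rw [abs_sub_comm b]; linarith

lemma exists_weight_of_frequently_lt {r : ℕ → ℝ} (hr : ∀ b, ∃ᶠ m in atTop, b < r m) :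
    ∃ w : ℕ → ℝ, w 0 = 0 ∧ Tendsto (fun m => w m ^ 2 * r m) atTop (𝓝 0) ∧
      ∃ᶠ m in atTop, w m * r m = 1 := by
  obtain ⟨ns, hns, hP⟩ := extraction_forall_of_frequently fun k : ℕ =>
    (hr (k + 1)).and_eventually (eventually_ge_atTop 1)
  have hpos k : 0 < r (ns k) := by linarith [(hP k).1, (k.cast_nonneg : (0 : ℝ) ≤ k)]
  refine ⟨(Set.range ns).indicator fun m => (r m)⁻¹, ?_, ?_, ?_⟩
  · refine Set.indicator_of_notMem ?_ _
    rintro ⟨k, hk⟩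
    have := (hP k).2
    omega
  · refine Metric.tendsto_atTop.2 fun ε hε => ?_
    obtain ⟨K, hK⟩ := exists_nat_gt ε⁻¹
    refine ⟨ns K, fun m hm => ?_⟩
    by_cases hmr : m ∈ Set.range ns
    · obtain ⟨k, rfl⟩ := hmr
      have hKk : (K : ℝ) ≤ k := by exact_mod_cast hns.le_iff_le.1 hm
      rw [Set.indicator_of_mem (Set.mem_range_self k), Real.dist_0_eq_abs, sq, mul_assoc,
        inv_mul_cancel₀ (hpos k).ne', mul_one, abs_of_pos (inv_pos.2 (hpos k))]
      exact inv_lt_of_inv_lt₀ hε (by linarith [(hP k).1])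
    · simpa [Set.indicator_of_notMem hmr] using hε
  · refine frequently_atTop.2 fun N => ⟨ns N, hns.id_le N, ?_⟩
    rw [Set.indicator_of_mem (Set.mem_range_self N), inv_mul_cancel₀ (hpos N).ne']

end Sequences

namespace Frame

variable (fr : Frame E)

lemma const_mul_mem_F {φ : E → ℝ} (hφ : φ ∈ fr.F) (a : ℝ) : (fun x => a * φ x) ∈ fr.F := by
  simpa using fr.F_linear φ hφ φ hφ a 0

lemma zero_mem_F : (0 : E → ℝ) ∈ fr.F := by
  obtain ⟨φ, hφ, -⟩ := fr.F_dense 0 measurable_const MemLp.zero 1 one_pos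
  simpa [Pi.zero_def] using fr.const_mul_mem_F hφ 0

lemma memLp_of_mem_C {φ : E → ℝ} (hφ : φ ∈ fr.C) (n : ℕ) : MemLp φ 2 (fr.ν n) :=
  hφ.1.2.1 n

lemma exists_seq_mem_F_ae_eq {φs : ℕ → E → ℝ} (hφs : ∀ n, φs n ∈ fr.C) :
    ∃ g : ℕ → E → ℝ, (∀ m, g m ∈ fr.F) ∧ ∀ m, 1 ≤ m → φs m =ᵐ[fr.ν m] g m := by
  have h m : ∃ g ∈ fr.F, 1 ≤ m → φs m =ᵐ[fr.ν m] g := by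
    by_cases hm : 1 ≤ m
    · obtain ⟨g, hgF, hg⟩ := (hφs m).2.1 m hm
      exact ⟨g, hgF, fun _ => hg⟩
    · exact ⟨0, fr.zero_mem_F, fun h => absurd h hm⟩
  choose g hgF hg using h
  exact ⟨g, hgF, hg⟩

lemma ae_mem_En (n : ℕ) : ∀ᵐ x ∂fr.ν n, x ∈ fr.En n :=
  mem_ae_iff.2 (fr.nullEn n)

theorem tendsto_ip_of_mem_C {φ ψ : E → ℝ} (hφ : φ ∈ fr.C) (hψ : ψ ∈ fr.C) :
    Tendsto (fun n => ip (fr.ν n) φ ψ) atTop (𝓝 (ip (fr.ν 0) φ ψ)) := by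
  obtain ⟨⟨-, hφL2, hφφ⟩, -, hφF⟩ := hφ
  obtain ⟨⟨hψm, hψL2, hψψ⟩, -, hψF⟩ := hψ
  obtain ⟨B, hB⟩ := hφφ.sqrt.bddAbove_range
  have hB0 : 0 ≤ B := (Real.sqrt_nonneg _).trans (hB ⟨0, rfl⟩)
  refine tendsto_of_forall_approx fun ε hε => ?_
  set δ := ε / (B + 1)
  have hδ : 0 < δ := by positivity
  obtain ⟨χ, hχF, hχ⟩ := fr.F_dense ψ hψm (hψL2 0) (δ ^ 2) (by positivity)
  have hχL2 := fr.F_memL2 χ hχF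
  have hdist : Tendsto (fun n => ip (fr.ν n) (fun x => ψ x - χ x) (fun x => ψ x - χ x))
      atTop (𝓝 (ip (fr.ν 0) (fun x => ψ x - χ x) (fun x => ψ x - χ x))) := by
    simp only [ip_sub_sub (hψL2 _) (hχL2 _) (hψL2 _) (hχL2 _), ip_comm _ χ ψ]
    exact ((hψψ.sub (hψF χ hχF)).sub (hψF χ hχF)).add (fr.F_tendsto χ hχF)
  have hclose n (hn : ip (fr.ν n) (fun x => ψ x - χ x) (fun x => ψ x - χ x) < δ ^ 2) :
      |ip (fr.ν n) φ ψ - ip (fr.ν n) φ χ| ≤ ε := by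
    rw [← ip_sub_right (hφL2 n) (hψL2 n) (hχL2 n)]
    calc _ ≤ √(ip (fr.ν n) φ φ) * √(ip (fr.ν n) (fun x => ψ x - χ x) (fun x => ψ x - χ x)) :=
          abs_ip_le (hφL2 n) ((hψL2 n).sub (hχL2 n))
      _ ≤ (B + 1) * δ := by
          gcongr
          · exact (hB ⟨n, rfl⟩).trans (le_add_of_nonneg_right zero_le_one)
          · exact ((Real.sqrt_lt' hδ).2 hn).le
      _ = ε := by simp only [δ]; field_simp
  refine ⟨fun n => ip (fr.ν n) φ χ, ip (fr.ν 0) φ χ, hφF χ hχF, hclose 0 hχ, ?_⟩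
  exact (hdist.eventually_lt_const hχ).mono hclose

def glue (f : ℕ → E → ℝ) : E → ℝ := fun x => ∑' m, (fr.En m).indicator (f m) x

variable {fr} {f : ℕ → E → ℝ}

lemma glue_eq_of_mem_En {m : ℕ} {x : E} (hx : x ∈ fr.En m) : fr.glue f x = f m x := by
  rw [glue, tsum_eq_single m fun k hk =>
    Set.indicator_of_notMem (Set.disjoint_right.1 (fr.disjEn k m hk) hx) _,
    Set.indicator_of_mem hx]

lemma glue_ae_eq (m : ℕ) : fr.glue f =ᵐ[fr.ν m] f m :=
  (fr.ae_mem_En m).mono fun _ => glue_eq_of_mem_En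

lemma measurable_glue (hf : ∀ m, Measurable (f m)) : Measurable (fr.glue f) :=
  Measurable.tsum fun m => (hf m).indicator (fr.measEn m)

lemma glue_mem_C (hfF : ∀ m, f m ∈ fr.F)
    (hff : Tendsto (fun m => ip (fr.ν m) (f m) (f m)) atTop (𝓝 (ip (fr.ν 0) (f 0) (f 0))))
    (hfχ : ∀ χ ∈ fr.F,
      Tendsto (fun m => ip (fr.ν m) (f m) χ) atTop (𝓝 (ip (fr.ν 0) (f 0) χ))) :
    fr.glue f ∈ fr.C := by
  have hglue m : ip (fr.ν m) (fr.glue f) (fr.glue f) = ip (fr.ν m) (f m) (f m) :=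
    ip_congr_ae (glue_ae_eq m) (glue_ae_eq m)
  have hglueχ m χ : ip (fr.ν m) (fr.glue f) χ = ip (fr.ν m) (f m) χ :=
    ip_congr_ae (glue_ae_eq m) .rfl
  refine ⟨⟨measurable_glue fun m => fr.F_measurable _ (hfF m),
    fun m => (fr.F_memL2 _ (hfF m) m).ae_eq (glue_ae_eq m).symm, ?_⟩,
    fun m _ => ⟨f m, hfF m, glue_ae_eq m⟩, fun χ hχ => ?_⟩
  · simpa only [hglue] using hff
  · simpa only [hglueχ] using hfχ χ hχ

theorem isBoundedUnder_ip_self_of_wConv {φs : ℕ → E → ℝ} {φ : E → ℝ}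
    (hφs : ∀ n, φs n ∈ fr.C) (hφ : fr.WConv φs φ) :
    IsBoundedUnder (· ≤ ·) atTop fun n => ip (fr.ν n) (φs n) (φs n) := by
  by_contra hunb
  simp only [IsBoundedUnder, IsBounded, eventually_map, not_exists, not_eventually,
    not_le] at hunb
  obtain ⟨w, hw0, hwr, hfreq⟩ := exists_weight_of_frequently_lt hunb
  obtain ⟨g, hgF, hg⟩ := fr.exists_seq_mem_F_ae_eq hφs
  set f : ℕ → E → ℝ := fun m x => w m * g m x
  have hfF m : f m ∈ fr.F := fr.const_mul_mem_F (hgF m) (w m)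
  have hf0 h : ip (fr.ν 0) (f 0) h = 0 := by
    simp only [f]
    rw [ip_const_mul_left, hw0, zero_mul]
  have hff : Tendsto (fun m => ip (fr.ν m) (f m) (f m)) atTop (𝓝 0) := by
    refine hwr.congr' ((eventually_ge_atTop 1).mono fun m hm => ?_)
    simp only [f, ip_const_mul_left, ip_comm _ (g m), ip_congr_ae (hg m hm) (hg m hm)]
    ring
  have hC : fr.glue f ∈ fr.C := by
    refine glue_mem_C hfF (by rwa [hf0]) fun χ hχ => ?_
    rw [hf0]
    exact tendsto_ip_zero (fun m => fr.F_memL2 _ (hfF m) m) (fr.F_memL2 χ hχ) hff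
      (fr.F_tendsto χ hχ).isBoundedUnder_le
  have hlim : Tendsto (fun m => w m * ip (fr.ν m) (φs m) (φs m)) atTop (𝓝 0) := by
    have h := hφ _ hC
    rw [ip_congr_ae .rfl (glue_ae_eq 0), ip_comm, hf0] at h
    refine h.congr' ((eventually_ge_atTop 1).mono fun m hm => ?_)
    rw [ip_congr_ae .rfl (glue_ae_eq m), ip_comm, ip_const_mul_left,
      ip_congr_ae (hg m hm).symm .rfl]
  exact hfreq (hlim.eventually_ne zero_ne_one)

end Frame

/-- Proposition 2.3 (d): if `φs n ∈ 𝓒` `w`-converges to `φ ∈ 𝓒`, `ψs n ∈ 𝓒`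
`w`-converges to `ψ ∈ 𝓒`, and `⟨φs n - φ, ψs n - ψ⟩ₙ ≥ 0` for all `n`, then
`liminf_n ⟨φs n, ψs n⟩ₙ ≥ ⟨φ, ψ⟩`. -/
theorem le_liminf_ip (fr : Frame E) (φs ψs : ℕ → E → ℝ)
    (hφs : ∀ n, φs n ∈ fr.C) (hψs : ∀ n, ψs n ∈ fr.C)
    {φ ψ : E → ℝ} (hφ : φ ∈ fr.C) (hψ : ψ ∈ fr.C)
    (hwφ : fr.WConv φs φ) (hwψ : fr.WConv ψs ψ)
    (hpos : ∀ n, 0 ≤ ip (fr.ν n) (fun x => φs n x - φ x) (fun x => ψs n x - ψ x)) :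
    ip (fr.ν 0) φ ψ ≤ liminf (fun n => ip (fr.ν n) (φs n) (ψs n)) atTop := by
  have hφsL2 n := fr.memLp_of_mem_C (hφs n) n
  have hψsL2 n := fr.memLp_of_mem_C (hψs n) n
  have hlower n : ip (fr.ν n) (φs n) ψ + ip (fr.ν n) φ (ψs n) - ip (fr.ν n) φ ψ
      ≤ ip (fr.ν n) (φs n) (ψs n) := by
    have h := hpos n
    rw [ip_sub_sub (hφsL2 n) (fr.memLp_of_mem_C hφ n) (hψsL2 n) (fr.memLp_of_mem_C hψ n)] at h
    linarith
  have hlim : Tendsto (fun n => ip (fr.ν n) (φs n) ψ + ip (fr.ν n) φ (ψs n) - ip (fr.ν n) φ ψ)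
      atTop (𝓝 (ip (fr.ν 0) φ ψ)) := by
    have hφψs := hwψ φ hφ
    simp only [ip_comm _ (ψs _) φ, ip_comm _ ψ φ] at hφψs
    simpa using ((hwφ ψ hψ).add hφψs).sub (fr.tendsto_ip_of_mem_C hφ hψ)
  have hbdd := isBoundedUnder_ip hφsL2 hψsL2 (fr.isBoundedUnder_ip_self_of_wConv hφs hwφ)
    (fr.isBoundedUnder_ip_self_of_wConv hψs hwψ)
  calc ip (fr.ν 0) φ ψ = liminf _ atTop := hlim.liminf_eq.symm
    _ ≤ _ := liminf_le_liminf (.of_forall hlower) hlim.isBoundedUnder_ge hbdd.isCoboundedUnder_ge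

end Mosco
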